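/- arXiv:1312.7820 — 2 statements merged into one kernel-verified Lean document; each statement's English description precedes it below -/
import Mathlib

section
/- Let Γ be a stepped plane that contains no translate of any of the four forbidden patterns, let P ⊆ Γ be a pattern, and let A ⊆ Γ be an L_FS-annulus of P in Γ. Then for every i ∈ {1,2,3}, Σᵢ(A) is an L_FS-annulus of Σᵢ(P) in the stepped plane Σᵢ(Γ). -/
open Matrix
open scoped Classical

noncomputable section

abbrev Z3 := Fin 3 → ℤ
abbrev R3 := Fin 3 → ℝ

/-- The inner product `⟨x, v⟩` of an integer vector with a real vector. -/
def dot3 (x : Z3) (v : R3) : ℝ := ∑ i, (x i : ℝ) * v i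

/-- Two points of `ℤ³` are 2-adjacent if `‖x − y‖₁ = 1`. -/
def adj3 (x y : Z3) : Prop := (∑ i, |x i - y i|) = 1

/-- A subset of `ℤ³` is 2-connected if it is nonempty and any two of its points are
joined by a finite chain of points of the set with consecutive points 2-adjacent. -/
def Connected3 (A : Set Z3) : Prop :=
  A.Nonempty ∧ ∀ x ∈ A, ∀ y ∈ A,
    Relation.ReflTransGen (fun a b => b ∈ A ∧ adj3 a b) x y

/-- The arithmetical discrete plane `P(v, ω)`. -/
def Plane (v : R3) (ω : ℝ) : Set Z3 := {x | 0 ≤ dot3 x v ∧ dot3 x v < ω}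

/-- The connecting thickness `Ω(v)`. -/
def omegaConn (v : R3) : ℝ := sInf {ω : ℝ | 0 ≤ ω ∧ Connected3 (Plane v ω)}

/-- `O₃⁺ = {v : 0 ≤ v₁ ≤ v₂ ≤ v₃}`. -/
def O3 : Set R3 := {v | 0 ≤ v 0 ∧ v 0 ≤ v 1 ∧ v 1 ≤ v 2}

/-- The ordered fully subtractive map. -/
def FS (v : R3) : R3 :=
  if v 0 ≤ v 1 - v 0 ∧ v 1 - v 0 ≤ v 2 - v 0 then ![v 0, v 1 - v 0, v 2 - v 0]
  else if v 1 - v 0 < v 0 ∧ v 0 ≤ v 2 - v 0 then ![v 1 - v 0, v 0, v 2 - v 0]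
  else ![v 1 - v 0, v 2 - v 0, v 0]

/-- `F₃ = {v ∈ O₃⁺ : v₁⁽ⁿ⁾ + v₂⁽ⁿ⁾ > v₃⁽ⁿ⁾ for all n}`. -/
def F3set : Set R3 :=
  {v | v ∈ O3 ∧ ∀ n : ℕ, (FS^[n] v) 2 < (FS^[n] v) 0 + (FS^[n] v) 1}

/-- Branch index of `F` at `v`: values `0, 1, 2` encode the branches labelled `1, 2, 3`. -/
def FSidx (v : R3) : Fin 3 :=
  if v 0 ≤ v 1 - v 0 ∧ v 1 - v 0 ≤ v 2 - v 0 then 0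
  else if v 1 - v 0 < v 0 ∧ v 0 ≤ v 2 - v 0 then 1
  else 2

/-- The matrices `M₁, M₂, M₃` of the fully subtractive algorithm. -/
def Mmat : Fin 3 → Matrix (Fin 3) (Fin 3) ℤ :=
  ![!![1,0,0; 1,1,0; 1,0,1], !![0,1,0; 1,1,0; 0,1,1], !![0,0,1; 1,0,1; 0,1,1]]

def e1 : Z3 := ![1,0,0]

/-- The product `M₁ ⋯ Mₙ` of the matrices associated with the F-expansion of `v`. -/
def prodM (v : R3) (n : ℕ) : Matrix (Fin 3) (Fin 3) ℤ :=
  ((List.range n).map (fun j => Mmat (FSidx (FS^[j] v)))).prod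

/-- The translation vector `((M₁⋯Mₙ)ᵀ)⁻¹ · e₁`. -/
def transVec (v : R3) (n : ℕ) : Z3 := ((prodM v n)ᵀ)⁻¹ *ᵥ e1

/-- The sequence `Tₙ` of subsets of `ℤ³`: `T₀ = {0}`, `T_{n+1} = Tₙ ∪ (Tₙ + ((M₁⋯Mₙ)ᵀ)⁻¹·e₁)`
(so that `T₁ = {0, e₁}`, the empty matrix product being the identity). -/
def Tseq (v : R3) : ℕ → Set Z3
  | 0 => {0}
  | n + 1 => Tseq v n ∪ ((fun x => x + transVec v n) '' Tseq v n)

/-- A unit face is a pair `(x, i)` of its distinguished vertex `x ∈ ℤ³` and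
its type `i ∈ Fin 3` (encoding the types `1, 2, 3`). A pattern is a set of faces. -/
abbrev Face := Z3 × Fin 3

/-- The lower half unit cube `U = [0,1]* ∪ [0,2]* ∪ [0,3]*`. -/
def Uset : Set Face := {(0, 0), (0, 1), (0, 2)}

/-- Image of the face `[0, t]*` under the dual substitution `Σᵢ`. -/
def dualBase (i t : Fin 3) : Set Face :=
  if t = i then Uset
  else if (i = 0 ∧ t = 1) ∨ (i ≠ 0 ∧ t = 0) then {(e1, 1)}
  else {(e1, 2)}

/-- Image of a face under the dual substitution `Σᵢ`:
`Σᵢ([x,t]*) = (Mᵢᵀ)⁻¹ x + Σᵢ([0,t]*)`. -/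
def dualFace (i : Fin 3) (f : Face) : Set Face :=
  (fun g : Face => (((Mmat i)ᵀ)⁻¹ *ᵥ f.1 + g.1, g.2)) '' dualBase i f.2

/-- Dual substitution `Σᵢ` extended to patterns. -/
def dualPat (i : Fin 3) (P : Set Face) : Set Face := ⋃ f ∈ P, dualFace i f

/-- The translate of a pattern by `t ∈ ℤ³`. -/
def translatePat (t : Z3) (P : Set Face) : Set Face := (fun f : Face => (f.1 + t, f.2)) '' P

/-- The stepped plane `Γ_w`. -/
def stepped (w : R3) : Set Face := {f | 0 ≤ dot3 f.1 w ∧ dot3 f.1 w < w f.2}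

/-- The nine patterns of `L_FS` (base representatives, used up to translation). -/
def LFS : Set (Set Face) :=
  { {(0, 0), (0, 1)},
    {(0, 0), (![-1,1,0], 1)},
    {(0, 0), (0, 2)},
    {(0, 0), (![-1,0,1], 2)},
    {(0, 1), (0, 2)},
    {(0, 1), (![0,-1,1], 2)},
    {(0, 1), (![1,0,0], 1), (0, 2)},
    {(0, 2), (![1,0,0], 2), (0, 1)},
    {(0, 2), (![0,1,0], 2), (0, 0)} }

/-- The twelve two-face edge-connected patterns (base representatives). -/
def Ledge : Set (Set Face) :=
  { {(0, 0), (0, 1)},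
    {(0, 0), (![-1,1,0], 1)},
    {(0, 0), (0, 2)},
    {(0, 0), (![-1,0,1], 2)},
    {(0, 1), (0, 2)},
    {(0, 1), (![0,-1,1], 2)},
    {(0, 0), (![0,1,0], 0)},
    {(0, 0), (![0,0,1], 0)},
    {(0, 1), (![1,0,0], 1)},
    {(0, 1), (![0,0,1], 1)},
    {(0, 2), (![1,0,0], 2)},
    {(0, 2), (![0,1,0], 2)} }

/-- The four forbidden patterns
`[0,1]*∪[(0,1,0),1]*`, `[0,1]*∪[(0,0,1),1]*`, `[0,2]*∪[(0,0,1),2]*`, `[0,3]*∪[(1,1,0),3]*`. -/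
def Forbidden : Set (Set Face) :=
  { {(0, 0), (![0,1,0], 0)},
    {(0, 0), (![0,0,1], 0)},
    {(0, 1), (![0,0,1], 1)},
    {(0, 2), (![1,1,0], 2)} }

/-- A pattern `P` is `L`-covered if any two of its faces are joined by a chain of
translates of elements of `L`, all contained in `P`, with consecutive ones sharing a face. -/
def IsCovered (L : Set (Set Face)) (P : Set Face) : Prop :=
  ∀ e ∈ P, ∀ f ∈ P, ∃ n : ℕ, ∃ Q : Fin (n + 1) → Set Face,
    (∀ k, ∃ R ∈ L, ∃ t : Z3, Q k = translatePat t R) ∧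
    e ∈ Q 0 ∧ f ∈ Q (Fin.last n) ∧
    (∀ k, Q k ⊆ P) ∧
    (∀ k : Fin n, (Q k.castSucc ∩ Q k.succ).Nonempty)

/-- A pattern `P` is strongly `L`-covered if it is `L`-covered and every translate of an
element of `L_edge` contained in `P` is completed within `P` by a translate of an element of `L`. -/
def IsStronglyCovered (L : Set (Set Face)) (P : Set Face) : Prop :=
  IsCovered L P ∧
  ∀ X ∈ Ledge, ∀ t : Z3, translatePat t X ⊆ P →
    ∃ Y ∈ L, ∃ s : Z3, translatePat t X ⊆ translatePat s Y ∧ translatePat s Y ⊆ P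

/-- The geometric realization of a face in `ℝ³`. -/
def faceGeom (f : Face) : Set R3 :=
  {q | q f.2 = (f.1 f.2 : ℝ) ∧ ∀ j, j ≠ f.2 → (f.1 j : ℝ) ≤ q j ∧ q j ≤ (f.1 j : ℝ) + 1}

/-- The geometric realization of a pattern in `ℝ³`. -/
def patGeom (P : Set Face) : Set R3 := ⋃ f ∈ P, faceGeom f

/-- `A` is an `L_FS`-annulus of `P` in the stepped plane `Γ`. -/
def IsAnnulus (Γ P A : Set Face) : Prop :=
  IsCovered LFS P ∧ IsCovered LFS (A ∪ P) ∧ IsCovered LFS (Γ \ (A ∪ P)) ∧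
  IsStronglyCovered LFS A ∧
  A ∩ P = ∅ ∧
  patGeom P ∩ closure (patGeom (Γ \ (P ∪ A))) = ∅

/-- Apply a finite list of dual substitutions, the head being applied last:
`applySubs [i₁, …, iₙ] P = Σ_{i₁} ∘ ⋯ ∘ Σ_{iₙ}(P)`. -/
def applySubs : List (Fin 3) → Set Face → Set Face
  | [], P => P
  | i :: l, P => dualPat i (applySubs l P)

/-- The pattern `Pₙ = Σ_{i₁} ∘ ⋯ ∘ Σ_{iₙ}(U)` associated with the F-expansion of `v`. -/
def PatN (v : R3) (n : ℕ) : Set Face :=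
  applySubs ((List.range n).map (fun j => FSidx (FS^[j] v))) Uset

/-- The set `𝐏ₙ` of distinguished vertices of the faces of `Pₙ`. -/
def Pverts (v : R3) (n : ℕ) : Set Z3 := {x | ∃ t : Fin 3, (x, t) ∈ PatN v n}

/-!
Avoiding the forbidden patterns forces `w₀ ≤ w₁ ≤ w₂ ≤ w₀ + w₁`. On this cone, whose extreme
rays are `(0,1,1)`, `(1,1,1)`, `(1,1,2)`, a linear certificate shows that many pairs of faces at
a given relative position never both lie in `Γ_w`. Two faces of `Σᵢ(Γ_w)` at relative position
`δ` come from faces at relative position `Mᵢᵀ(δ + offsets)`, so each local question about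
`Σᵢ(Γ_w)` becomes a finite check:
* `Σᵢ` is injective on the faces of `Γ_w`, hence commutes with intersections and complements;
* `L_FS`-coverings lift, because the image of each element of `L_FS` is `L_FS`-covered;
* an edge pattern of `Σᵢ(A)` either cannot occur or is completed from a completion in `A`;
* faces of `Σᵢ(P)` and `Σᵢ(Γ ∖ (P ∪ A))` meet only if their parents meet, except for two parents
  of type `i` at a corner position; then two faces of `Γ` meet both parents, so they lie in `A`,
  and the strong covering of `A` puts one of the parents in `A`.
-/

namespace DualSubst

/-- `invTr i x = (Mᵢᵀ)⁻¹ x`, written out so that it computes. -/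
def invTr (i : Fin 3) (x : Z3) : Z3 :=
  if i = 0 then ![x 0 - x 1 - x 2, x 1, x 2]
  else if i = 1 then ![x 1 - x 0 - x 2, x 0, x 2]
  else ![x 2 - x 0 - x 1, x 0, x 1]

/-- `tr i x = Mᵢᵀ x`. -/
def tr (i : Fin 3) (x : Z3) : Z3 :=
  if i = 0 then ![x 0 + x 1 + x 2, x 1, x 2]
  else if i = 1 then ![x 1, x 0 + x 1 + x 2, x 2]
  else ![x 1, x 2, x 0 + x 1 + x 2]

theorem z3_ext {x y : Z3} (h0 : x 0 = y 0) (h1 : x 1 = y 1) (h2 : x 2 = y 2) : x = y := by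
  funext j; fin_cases j <;> assumption

theorem inv_transpose_mulVec (i : Fin 3) (x : Z3) : ((Mmat i)ᵀ)⁻¹ *ᵥ x = invTr i x := by
  have hinv : ((Mmat i)ᵀ)⁻¹ =
      ![!![1,-1,-1; 0,1,0; 0,0,1], !![-1,1,-1; 1,0,0; 0,0,1], !![-1,-1,1; 1,0,0; 0,1,0]] i := by
    apply Matrix.inv_eq_right_inv
    fin_cases i <;> decide
  rw [hinv]
  fin_cases i <;>
    refine z3_ext ?_ ?_ ?_ <;> simp [invTr, Matrix.mulVec, dotProduct, Fin.sum_univ_three] <;> ring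

theorem invTr_tr (i : Fin 3) (x : Z3) : invTr i (tr i x) = x := by
  fin_cases i <;> refine z3_ext ?_ ?_ ?_ <;> simp [invTr, tr] <;> ring

theorem invTr_add (i : Fin 3) (x y : Z3) : invTr i (x + y) = invTr i x + invTr i y := by
  fin_cases i <;> refine z3_ext ?_ ?_ ?_ <;> simp [invTr] <;> ring

theorem tr_invTr (i : Fin 3) (x : Z3) : tr i (invTr i x) = x := by
  fin_cases i <;> refine z3_ext ?_ ?_ ?_ <;> simp [invTr, tr] <;> ring

theorem eq_add_tr_of_invTr_eq {i : Fin 3} {x x' d : Z3} (h : invTr i x' = invTr i x + d) :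
    x' = x + tr i d := by
  rw [← tr_invTr i x', h, ← invTr_tr i d, ← invTr_add, tr_invTr, invTr_tr]

/-- The type of the single face `Σᵢ([0,τ]*)` for `τ ≠ i`. -/
def sideType (i τ : Fin 3) : Fin 3 := if (i = 0 ∧ τ = 1) ∨ (i ≠ 0 ∧ τ = 0) then 1 else 2

/-- `c` is the type of some face of `Σᵢ([x,τ]*)`. -/
abbrev ChildType (i τ c : Fin 3) : Prop := τ = i ∨ c = sideType i τ

/-- The faces of `Σᵢ([x,τ]*)` sit at `(Mᵢᵀ)⁻¹ x + childOffset i τ`. -/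
def childOffset (i τ : Fin 3) : Z3 := if τ = i then 0 else e1

theorem mem_dualFace {i : Fin 3} {x y : Z3} {τ c : Fin 3} :
    (y, c) ∈ dualFace i (x, τ) ↔ ChildType i τ c ∧ y = invTr i x + childOffset i τ := by
  simp only [dualFace, inv_transpose_mulVec, Set.mem_image, Prod.mk.injEq]
  fin_cases i <;> fin_cases τ <;> fin_cases c <;>
    simp [dualBase, Uset, ChildType, sideType, childOffset, eq_comm]

theorem mem_dualPat {i : Fin 3} {S : Set Face} {g : Face} :
    g ∈ dualPat i S ↔ ∃ f ∈ S, g ∈ dualFace i f := by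
  simp [dualPat]

theorem dualPat_mono (i : Fin 3) {S T : Set Face} (h : S ⊆ T) : dualPat i S ⊆ dualPat i T :=
  Set.biUnion_subset_biUnion_left h

theorem dualPat_union (i : Fin 3) (S T : Set Face) :
    dualPat i (S ∪ T) = dualPat i S ∪ dualPat i T :=
  Set.biUnion_union S T _

theorem dualFace_nonempty (i : Fin 3) (f : Face) : (dualFace i f).Nonempty :=
  ⟨(invTr i f.1 + childOffset i f.2, if f.2 = i then 0 else sideType i f.2),
    mem_dualFace.2 ⟨by by_cases h : f.2 = i <;> simp [ChildType, h], rfl⟩⟩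

def parentShift (i τ τ' : Fin 3) (δ : Z3) : Z3 := tr i (δ + childOffset i τ - childOffset i τ')

theorem eq_add_parentShift {i : Fin 3} {x x' y δ : Z3} {τ τ' c c' : Fin 3}
    (h : (y, c) ∈ dualFace i (x, τ)) (h' : (y + δ, c') ∈ dualFace i (x', τ')) :
    x' = x + parentShift i τ τ' δ := by
  obtain ⟨-, rfl⟩ := mem_dualFace.1 h
  obtain ⟨-, hxy⟩ := mem_dualFace.1 h'
  exact eq_add_tr_of_invTr_eq
    (by rw [← add_sub_cancel_right (invTr i x') (childOffset i τ'), ← hxy]; abel)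

theorem exists_parents {i : Fin 3} {S S' : Set Face} {y δ : Z3} {c c' : Fin 3}
    (h : (y, c) ∈ dualPat i S) (h' : (y + δ, c') ∈ dualPat i S') :
    ∃ x τ τ', (x, τ) ∈ S ∧ (x + parentShift i τ τ' δ, τ') ∈ S' ∧
      ChildType i τ c ∧ ChildType i τ' c' ∧ y = invTr i x + childOffset i τ := by
  obtain ⟨⟨x, τ⟩, hx, hy⟩ := mem_dualPat.1 h
  obtain ⟨⟨x', τ'⟩, hx', hy'⟩ := mem_dualPat.1 h'
  obtain ⟨hc, hyx⟩ := mem_dualFace.1 hy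
  refine ⟨x, τ, τ', hx, eq_add_parentShift hy hy' ▸ hx', hc, (mem_dualFace.1 hy').1, hyx⟩

theorem mem_translatePat {t : Z3} {R : Set Face} {y : Z3} {c : Fin 3} :
    (y, c) ∈ translatePat t R ↔ (y - t, c) ∈ R := by
  constructor
  · rintro ⟨⟨x, c⟩, hx, hxy⟩
    simp only [Prod.mk.injEq] at hxy
    obtain ⟨rfl, rfl⟩ := hxy
    simpa using hx
  · exact fun h => ⟨(y - t, c), h, by simp⟩

theorem translatePat_translatePat (s t : Z3) (R : Set Face) :
    translatePat s (translatePat t R) = translatePat (t + s) R := by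
  simp only [translatePat, Set.image_image, add_assoc]

theorem dualPat_translatePat (i : Fin 3) (t : Z3) (R : Set Face) :
    dualPat i (translatePat t R) = translatePat (invTr i t) (dualPat i R) := by
  ext ⟨y, c⟩
  simp only [mem_translatePat, mem_dualPat, Prod.exists, mem_dualFace]
  constructor
  · rintro ⟨x, τ, hx, hc, rfl⟩
    refine ⟨x - t, τ, hx, hc, ?_⟩
    have := invTr_add i (x - t) t
    rw [sub_add_cancel] at this
    rw [this]
    abel
  · rintro ⟨x, τ, hx, hc, hy⟩
    refine ⟨x + t, τ, by simpa using hx, hc, ?_⟩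
    rw [invTr_add, ← sub_add_cancel y (invTr i t), hy]
    abel

/-- The normals of the stepped planes that avoid the four forbidden patterns. -/
def OrderedNormal (w : R3) : Prop := 0 ≤ w 0 ∧ w 0 ≤ w 1 ∧ w 1 ≤ w 2 ∧ w 2 ≤ w 0 + w 1

theorem dot3_apply (x : Z3) (w : R3) : dot3 x w = x 0 * w 0 + x 1 * w 1 + x 2 * w 2 := by
  simp [dot3, Fin.sum_univ_three]

theorem dot3_add (x y : Z3) (w : R3) : dot3 (x + y) w = dot3 x w + dot3 y w := by
  simp only [dot3_apply, Pi.add_apply]; push_cast; ring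

theorem dot3_neg (x : Z3) (w : R3) : dot3 (-x) w = -dot3 x w := by
  simp only [dot3_apply, Pi.neg_apply]; push_cast; ring

theorem dot3_single (τ : Fin 3) (w : R3) : dot3 (Pi.single τ 1) w = w τ := by
  fin_cases τ <;> simp [dot3_apply]

theorem translatePat_pair_subset {t : Z3} {a b : Face} {S : Set Face} :
    translatePat t {a, b} ⊆ S ↔ (a.1 + t, a.2) ∈ S ∧ (b.1 + t, b.2) ∈ S := by
  simp [translatePat, Set.image_insert_eq, Set.insert_subset_iff]

theorem orderedNormal_of_avoids {w : R3} (hw : ∀ i, 0 ≤ w i)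
    (havoid : ∀ X ∈ Forbidden, ∀ t : Z3, ¬ translatePat t X ⊆ stepped w) : OrderedNormal w := by
  have key : ∀ {c : Fin 3} {δ : Z3}, ({(0, c), (δ, c)} : Set Face) ∈ Forbidden →
      0 ≤ dot3 δ w → w c ≤ dot3 δ w := by
    intro c δ hX hδ
    by_contra hlt
    rw [not_le] at hlt
    have h0 : dot3 (0 : Z3) w = 0 := by simp [dot3]
    refine havoid _ hX 0 (translatePat_pair_subset.2 ⟨?_, ?_⟩) <;> rw [add_zero]
    · exact ⟨h0.ge, by rw [h0]; exact hδ.trans_lt hlt⟩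
    · exact ⟨hδ, hlt⟩
  have e1 : dot3 ![0,1,0] w = w 1 := by simp [dot3_apply]
  have e2 : dot3 ![0,0,1] w = w 2 := by simp [dot3_apply]
  have e3 : dot3 ![1,1,0] w = w 0 + w 1 := by simp [dot3_apply]
  have h01 := key (c := 0) (by simp [Forbidden]) (e1 ▸ hw 1)
  have h12 := key (c := 1) (by simp [Forbidden]) (e2 ▸ hw 2)
  have h2 := key (c := 2) (by simp [Forbidden]) (e3 ▸ add_nonneg (hw 0) (hw 1))
  rw [e1] at h01
  rw [e2] at h12
  rw [e3] at h2
  exact ⟨hw 0, h01, h12, h2⟩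

/-- `0 ≤ ⟨δ, w⟩` for every ordered normal `w`, since `(0,1,1)`, `(1,1,1)`, `(1,1,2)` span the
cone of ordered normals. -/
abbrev NonnegOnOrdered (δ : Z3) : Prop :=
  0 ≤ δ 1 + δ 2 ∧ 0 ≤ δ 0 + δ 1 + δ 2 ∧ 0 ≤ δ 0 + δ 1 + 2 * δ 2

theorem dot3_nonneg {w : R3} (hw : OrderedNormal w) {δ : Z3} (hδ : NonnegOnOrdered δ) :
    0 ≤ dot3 δ w := by
  obtain ⟨-, h01, h12, h2⟩ := hw
  obtain ⟨d1, d2, d3⟩ := hδ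
  have e : dot3 δ w = (w 1 - w 0) * ((δ 1 + δ 2 : ℤ) : ℝ)
      + (w 0 + w 1 - w 2) * ((δ 0 + δ 1 + δ 2 : ℤ) : ℝ)
      + (w 2 - w 1) * ((δ 0 + δ 1 + 2 * δ 2 : ℤ) : ℝ) := by
    rw [dot3_apply]; push_cast; ring
  rw [e]
  have := mul_nonneg (sub_nonneg.2 h01) (Int.cast_nonneg d1)
  have := mul_nonneg (by linarith : (0 : ℝ) ≤ w 0 + w 1 - w 2) (Int.cast_nonneg d2)
  have := mul_nonneg (sub_nonneg.2 h12) (Int.cast_nonneg d3)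
  linarith

/-- Certificate that `[x,τ]*` and `[x + δ,τ']*` never both lie in a stepped plane with
ordered normal. -/
abbrev Separated (δ : Z3) (τ τ' : Fin 3) : Prop :=
  NonnegOnOrdered (δ - Pi.single τ' 1) ∨ NonnegOnOrdered (-δ - Pi.single τ 1)

theorem Separated.false_of_mem {w : R3} (hw : OrderedNormal w) {δ : Z3} {τ τ' : Fin 3}
    (hδ : Separated δ τ τ') {x : Z3} (h : (x, τ) ∈ stepped w) (h' : (x + δ, τ') ∈ stepped w) :
    False := by
  obtain ⟨h0, h1⟩ := h
  obtain ⟨h0', h1'⟩ := h'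
  simp only [dot3_add] at h0' h1'
  rcases hδ with hδ | hδ <;> have := dot3_nonneg hw hδ <;>
    simp only [sub_eq_add_neg, dot3_add, dot3_neg, dot3_single] at this <;> linarith

theorem parent_table : ∀ i τ τ' c : Fin 3, ChildType i τ c → ChildType i τ' c →
    τ = τ' ∨ Separated (parentShift i τ τ' 0) τ τ' := by
  decide

theorem eq_of_mem_dualFace {w : R3} (hw : OrderedNormal w) {i : Fin 3} {f f' : Face}
    (hf : f ∈ stepped w) (hf' : f' ∈ stepped w) {g : Face}
    (hg : g ∈ dualFace i f) (hg' : g ∈ dualFace i f') : f = f' := by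
  obtain ⟨x, τ⟩ := f
  obtain ⟨x', τ'⟩ := f'
  obtain ⟨y, c⟩ := g
  have hx' := eq_add_parentShift (δ := 0) hg (by rwa [add_zero])
  rcases parent_table i τ τ' c (mem_dualFace.1 hg).1 (mem_dualFace.1 hg').1 with rfl | hsep
  · have : parentShift i τ τ 0 = 0 := by fin_cases i <;> fin_cases τ <;> decide
    rw [hx', this, add_zero]
  · exact (hsep.false_of_mem hw hf (hx' ▸ hf')).elim

theorem dualPat_inter_eq_empty {w : R3} (hw : OrderedNormal w) (i : Fin 3) {S T : Set Face}
    (hS : S ⊆ stepped w) (hT : T ⊆ stepped w) (hST : S ∩ T = ∅) :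
    dualPat i S ∩ dualPat i T = ∅ := by
  refine Set.eq_empty_of_forall_notMem fun g ⟨hgS, hgT⟩ => ?_
  obtain ⟨f, hf, hgf⟩ := mem_dualPat.1 hgS
  obtain ⟨f', hf', hgf'⟩ := mem_dualPat.1 hgT
  obtain rfl := eq_of_mem_dualFace hw (hS hf) (hT hf') hgf hgf'
  exact hST.subset ⟨hf, hf'⟩

theorem dualPat_stepped_diff {w : R3} (hw : OrderedNormal w) (i : Fin 3) {S : Set Face}
    (hS : S ⊆ stepped w) : dualPat i (stepped w) \ dualPat i S = dualPat i (stepped w \ S) := by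
  ext g
  simp only [Set.mem_sdiff, mem_dualPat]
  constructor
  · rintro ⟨⟨f, hf, hgf⟩, hgS⟩
    exact ⟨f, ⟨hf, fun hfS => hgS ⟨f, hfS, hgf⟩⟩, hgf⟩
  · rintro ⟨f, ⟨hf, hfS⟩, hgf⟩
    refine ⟨⟨f, hf, hgf⟩, fun ⟨f', hf', hgf'⟩ => hfS ?_⟩
    rwa [eq_of_mem_dualFace hw hf (hS hf') hgf hgf']

def Linked (L : Set (Set Face)) (P : Set Face) (a b : Face) : Prop :=
  ∃ R ∈ L, ∃ t, translatePat t R ⊆ P ∧ a ∈ translatePat t R ∧ b ∈ translatePat t R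

section Covering

variable {L : Set (Set Face)} {P : Set Face}

theorem Linked.symm {a b : Face} (h : Linked L P a b) : Linked L P b a :=
  let ⟨R, hR, t, hP, ha, hb⟩ := h; ⟨R, hR, t, hP, hb, ha⟩

instance : Std.Symm (Linked L P) := ⟨fun _ _ => Linked.symm⟩

theorem Linked.mono {P' : Set Face} (hPP' : P ⊆ P') {a b : Face} (h : Linked L P a b) :
    Linked L P' a b :=
  let ⟨R, hR, t, hP, ha, hb⟩ := h; ⟨R, hR, t, hP.trans hPP', ha, hb⟩

theorem transGen_linked_of_chain :
    ∀ (n : ℕ) (Q : Fin (n + 1) → Set Face), (∀ k, ∃ R ∈ L, ∃ t, Q k = translatePat t R) →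
      (∀ k, Q k ⊆ P) → (∀ k : Fin n, (Q k.castSucc ∩ Q k.succ).Nonempty) →
      ∀ {e f : Face}, e ∈ Q 0 → f ∈ Q (Fin.last n) → Relation.TransGen (Linked L P) e f
  | 0, Q, hL, hP, _, _, _, he, hf => by
    obtain ⟨R, hR, t, hQ⟩ := hL 0
    exact .single ⟨R, hR, t, hQ ▸ hP 0, hQ ▸ he, hQ ▸ hf⟩
  | n + 1, Q, hL, hP, hover, _, _, he, hf => by
    obtain ⟨b, hb, hb'⟩ := hover (Fin.last n)
    obtain ⟨R, hR, t, hQ⟩ := hL (Fin.last (n + 1))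
    refine .tail (transGen_linked_of_chain n (fun k => Q k.castSucc) (fun k => hL _)
      (fun k => hP _) (fun k => hover k.castSucc) he hb) ?_
    exact ⟨R, hR, t, hQ ▸ hP _, hQ ▸ hb', hQ ▸ hf⟩

theorem exists_chain_of_transGen {e f : Face} (h : Relation.TransGen (Linked L P) e f) :
    ∃ n : ℕ, ∃ Q : Fin (n + 1) → Set Face,
      (∀ k, ∃ R ∈ L, ∃ t, Q k = translatePat t R) ∧ e ∈ Q 0 ∧ f ∈ Q (Fin.last n) ∧
      (∀ k, Q k ⊆ P) ∧ ∀ k : Fin n, (Q k.castSucc ∩ Q k.succ).Nonempty := by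
  induction h with
  | single hef =>
    obtain ⟨R, hR, t, hP, he, hf⟩ := hef
    exact ⟨0, fun _ => translatePat t R, fun _ => ⟨R, hR, t, rfl⟩, he, hf, fun _ => hP,
      fun k => k.elim0⟩
  | @tail b c _ hbc ih =>
    obtain ⟨R, hR, t, hP', hb', hc⟩ := hbc
    obtain ⟨n, Q, hL, he, hb, hP, hover⟩ := ih
    refine ⟨n + 1, Fin.snoc Q (translatePat t R), fun k => ?_, by simpa using he,
      by simpa using hc, fun k => ?_, fun k => ?_⟩
    · cases k using Fin.lastCases
      · exact ⟨R, hR, t, by simp⟩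
      · simpa using hL _
    · cases k using Fin.lastCases <;> simp [hP, hP']
    · cases k using Fin.lastCases with
      | last => exact ⟨b, by simpa using hb, by simpa using hb'⟩
      | cast j =>
        rw [Fin.succ_castSucc, Fin.snoc_castSucc, Fin.snoc_castSucc]
        exact hover j

theorem isCovered_iff_transGen :
    IsCovered L P ↔ ∀ e ∈ P, ∀ f ∈ P, Relation.TransGen (Linked L P) e f :=
  ⟨fun h e he f hf =>
    let ⟨n, Q, hL, he, hf, hP, hover⟩ := h e he f hf
    transGen_linked_of_chain n Q hL hP hover he hf,
  fun h e he f hf => exists_chain_of_transGen (h e he f hf)⟩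

theorem Linked.translate (s : Z3) {a b : Face} (h : Linked L P a b) :
    Linked L (translatePat s P) (a.1 + s, a.2) (b.1 + s, b.2) := by
  obtain ⟨R, hR, t, hP, ha, hb⟩ := h
  refine ⟨R, hR, t + s, ?_, ?_, ?_⟩
  · rw [← translatePat_translatePat]; exact Set.image_mono hP
  · rw [← translatePat_translatePat]; exact ⟨a, ha, rfl⟩
  · rw [← translatePat_translatePat]; exact ⟨b, hb, rfl⟩

theorem isCovered_translatePat (h : IsCovered L P) (s : Z3) :
    IsCovered L (translatePat s P) := by
  rw [isCovered_iff_transGen] at h ⊢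
  rintro _ ⟨e, he, rfl⟩ _ ⟨f, hf, rfl⟩
  exact Relation.TransGen.lift _ (fun _ _ hab => hab.translate s) _ _ (h e he f hf)

section DualPat

variable {i : Fin 3}
  (hloc : ∀ R ∈ L, ∀ t, IsCovered L (dualPat i (translatePat t R)))
include hloc

theorem Linked.transGen_dualPat {f f' : Face} (h : Linked L P f f')
    {g g' : Face} (hg : g ∈ dualFace i f) (hg' : g' ∈ dualFace i f') :
    Relation.TransGen (Linked L (dualPat i P)) g g' := by
  obtain ⟨R, hR, t, hP, hf, hf'⟩ := h
  have hcov := isCovered_iff_transGen.1 (hloc R hR t) g (mem_dualPat.2 ⟨f, hf, hg⟩)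
    g' (mem_dualPat.2 ⟨f', hf', hg'⟩)
  exact Relation.TransGen.mono (fun _ _ => Linked.mono (dualPat_mono i hP)) _ _ hcov

theorem transGen_linked_dualPat {f f' : Face}
    (h : Relation.TransGen (Linked L P) f f') {g g' : Face} (hg : g ∈ dualFace i f)
    (hg' : g' ∈ dualFace i f') : Relation.TransGen (Linked L (dualPat i P)) g g' := by
  induction h generalizing g' with
  | single h => exact h.transGen_dualPat hloc hg hg'
  | @tail b _ _ hbc ih =>
    obtain ⟨gb, hgb⟩ := dualFace_nonempty i b
    exact (ih hgb).trans (hbc.transGen_dualPat hloc hgb hg')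

theorem isCovered_dualPat (hP : IsCovered L P) : IsCovered L (dualPat i P) := by
  rw [isCovered_iff_transGen] at hP ⊢
  intro g hg g' hg'
  obtain ⟨f, hf, hgf⟩ := mem_dualPat.1 hg
  obtain ⟨f', hf', hgf'⟩ := mem_dualPat.1 hg'
  exact transGen_linked_dualPat hloc (hP f hf f' hf') hgf hgf'

end DualPat

end Covering

def lfsList : List (List Face) :=
  [[(0, 0), (0, 1)], [(0, 0), (![-1,1,0], 1)], [(0, 0), (0, 2)], [(0, 0), (![-1,0,1], 2)],
    [(0, 1), (0, 2)], [(0, 1), (![0,-1,1], 2)], [(0, 1), (![1,0,0], 1), (0, 2)],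
    [(0, 2), (![1,0,0], 2), (0, 1)], [(0, 2), (![0,1,0], 2), (0, 0)]]

theorem mem_LFS {R : Set Face} : R ∈ LFS ↔ ∃ l ∈ lfsList, R = {g | g ∈ l} := by
  simp only [LFS, lfsList, Set.mem_insert_iff, Set.mem_singleton_iff, List.mem_cons,
    List.not_mem_nil, or_false, exists_eq_or_imp, exists_eq_left]
  exact Iff.rfl

def lfsPieces (W : List Face) : List (List Face) :=
  (lfsList.flatMap fun l => l.flatMap fun a => W.map fun g =>
    l.map fun b => (b.1 + (g.1 - a.1), b.2)).filter fun q => q.all fun g => decide (g ∈ W)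

theorem linked_of_mem_lfsPieces {W q : List Face} (hq : q ∈ lfsPieces W) {a b : Face}
    (ha : a ∈ q) (hb : b ∈ q) : Linked LFS {g | g ∈ W} a b := by
  simp only [lfsPieces, List.mem_filter, List.mem_flatMap, List.mem_map, List.all_eq_true,
    decide_eq_true_eq] at hq
  obtain ⟨⟨l, hl, a', -, g, -, rfl⟩, hW⟩ := hq
  have hshift : {f | f ∈ l.map fun b => (b.1 + (g.1 - a'.1), b.2)} =
      translatePat (g.1 - a'.1) {f | f ∈ l} := by
    ext; simp [translatePat]
  refine ⟨_, mem_LFS.2 ⟨l, hl, rfl⟩, g.1 - a'.1, ?_, ?_, ?_⟩ <;> rw [← hshift]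
  exacts [fun f hf => hW f hf, ha, hb]

def reachStep (W S : List Face) : List Face :=
  S ++ ((lfsPieces W).filter fun q => q.any fun a => decide (a ∈ S)).flatten

/-- Every face of `W` is reached from the first one through linked faces. -/
def coveredCheck : List Face → Bool
  | [] => true
  | h :: W =>
    let S := (reachStep (h :: W))^[W.length + 1]
      ((lfsPieces (h :: W)).filter fun q => decide (h ∈ q)).flatten
    (h :: W).all fun g => decide (g ∈ S)

theorem transGen_of_mem_reachStep_iterate {W : List Face} {h : Face} (n : ℕ) {S : List Face}
    (hS : ∀ a ∈ S, Relation.TransGen (Linked LFS {g | g ∈ W}) h a) :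
    ∀ a ∈ (reachStep W)^[n] S, Relation.TransGen (Linked LFS {g | g ∈ W}) h a := by
  induction n with
  | zero => exact hS
  | succ n ih =>
    rw [Function.iterate_succ_apply']
    intro a ha
    simp only [reachStep, List.mem_append, List.mem_flatten, List.mem_filter, List.any_eq_true,
      decide_eq_true_eq] at ha
    rcases ha with ha | ⟨q, ⟨hq, b, hbq, hb⟩, haq⟩
    · exact ih a ha
    · exact (ih b hb).tail (linked_of_mem_lfsPieces hq hbq haq)

theorem isCovered_of_coveredCheck {W : List Face} (hW : coveredCheck W = true) :
    IsCovered LFS {g | g ∈ W} := by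
  match W, hW with
  | [], _ => simp [IsCovered]
  | h :: W, hW =>
    simp only [coveredCheck, List.all_eq_true, decide_eq_true_eq] at hW
    have hreach := transGen_of_mem_reachStep_iterate (W := h :: W) (h := h) (W.length + 1)
      (S := ((lfsPieces (h :: W)).filter fun q => decide (h ∈ q)).flatten) (by
        simp only [List.mem_flatten, List.mem_filter, decide_eq_true_eq]
        rintro a ⟨q, ⟨hq, hhq⟩, haq⟩
        exact .single (linked_of_mem_lfsPieces hq hhq haq))
    rw [isCovered_iff_transGen]
    intro e he f hf
    exact (symm (hreach e (hW e he))).trans (hreach f (hW f hf))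

def dualFaceList (i : Fin 3) (f : Face) : List Face :=
  if f.2 = i then [(invTr i f.1, 0), (invTr i f.1, 1), (invTr i f.1, 2)]
  else [(invTr i f.1 + e1, sideType i f.2)]

theorem dualPat_setOf_mem (i : Fin 3) (l : List Face) :
    dualPat i {g | g ∈ l} = {g | g ∈ l.flatMap (dualFaceList i)} := by
  ext ⟨y, c⟩
  simp only [mem_dualPat, Set.mem_ofPred_eq, List.mem_flatMap]
  refine exists_congr fun ⟨x, τ⟩ => and_congr_right fun _ => ?_
  rw [mem_dualFace, dualFaceList]
  by_cases hτ : τ = i <;> fin_cases c <;> simp [hτ, ChildType, childOffset, eq_comm, and_comm]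

theorem coveredCheck_dualPat_lfs :
    ∀ i : Fin 3, ∀ l ∈ lfsList, coveredCheck (l.flatMap (dualFaceList i)) = true := by
  decide

theorem isCovered_dualPat_translatePat_of_mem_LFS (i : Fin 3) {R : Set Face} (hR : R ∈ LFS)
    (t : Z3) : IsCovered LFS (dualPat i (translatePat t R)) := by
  obtain ⟨l, hl, rfl⟩ := mem_LFS.1 hR
  rw [dualPat_translatePat, dualPat_setOf_mem]
  exact isCovered_translatePat (isCovered_of_coveredCheck (coveredCheck_dualPat_lfs i l hl)) _

/-- `(c, δ, c')` such that every translate of an element of `L_FS` containing `[0,c]* ∪ [δ,c]*`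
contains `[0,c']*`; `[0,c]* ∪ [δ,c]* ∪ [0,c']*` is one of them. -/
def edgeRules : List (Fin 3 × Z3 × Fin 3) :=
  [(1, ![1,0,0], 2), (2, ![1,0,0], 1), (2, ![0,1,0], 0)]

/-- `(c, δ)` such that `[0,c]* ∪ [δ,c]*` lies in no translate of an element of `L_FS`. -/
def isolatedEdges : List (Fin 3 × Z3) := [(0, ![0,1,0]), (0, ![0,0,1]), (1, ![0,0,1])]

def EdgeClosed (A : Set Face) : Prop :=
  ∀ r ∈ edgeRules, ∀ x, (x, r.1) ∈ A → (x + r.2.1, r.1) ∈ A → (x, r.2.2) ∈ A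

theorem lfs_edgeRule_table : ∀ l ∈ lfsList, ∀ r ∈ edgeRules, ∀ a ∈ l,
    a.2 = r.1 → (a.1 + r.2.1, r.1) ∈ l → (a.1, r.2.2) ∈ l := by
  decide

theorem edgeClosed_of_isStronglyCovered {A : Set Face} (h : IsStronglyCovered LFS A) :
    EdgeClosed A := by
  intro r hr x h1 h2
  have hX : ({(0, r.1), (r.2.1, r.1)} : Set Face) ∈ Ledge := by
    simp only [edgeRules, List.mem_cons, List.not_mem_nil, or_false] at hr
    rcases hr with rfl | rfl | rfl <;> simp [Ledge]
  obtain ⟨Y, hY, s, hXY, hYA⟩ :=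
    h.2 _ hX x (translatePat_pair_subset.2 ⟨by simpa using h1, by simpa [add_comm] using h2⟩)
  obtain ⟨l, hl, rfl⟩ := mem_LFS.1 hY
  have hmem : ∀ {y c}, (y, c) ∈ translatePat x {(0, r.1), (r.2.1, r.1)} → (y - s, c) ∈ l :=
    fun hy => mem_translatePat.1 (hXY hy)
  have h1' := hmem (y := x) (c := r.1) (mem_translatePat.2 (by simp))
  have h2' := hmem (y := x + r.2.1) (c := r.1) (mem_translatePat.2 (by simp))
  exact hYA (mem_translatePat.2
    (lfs_edgeRule_table l hl r hr _ h1' rfl (by rwa [sub_add_eq_add_sub])))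

theorem edgeRule_parent_table : ∀ i : Fin 3, ∀ r ∈ edgeRules, ∀ τ τ' : Fin 3,
    ChildType i τ r.1 → ChildType i τ' r.1 →
    τ = i ∨ Separated (parentShift i τ τ' r.2.1) τ τ' ∨
    ∃ r' ∈ edgeRules, r'.1 = τ ∧ τ' = τ ∧
      parentShift i τ τ' r.2.1 = r'.2.1 ∧
      ChildType i r'.2.2 r.2.2 ∧ childOffset i r'.2.2 = childOffset i τ := by
  decide

theorem isolatedEdge_parent_table : ∀ i : Fin 3, ∀ p ∈ isolatedEdges, ∀ τ τ' : Fin 3,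
    ChildType i τ p.1 → ChildType i τ' p.1 →
    Separated (parentShift i τ τ' p.2) τ τ' := by
  decide

section OrderedPlane

variable {w : R3} (hw : OrderedNormal w) {A : Set Face} (hA : A ⊆ stepped w) (i : Fin 3)
include hw hA

theorem EdgeClosed.dualPat (h : EdgeClosed A) : EdgeClosed (dualPat i A) := by
  intro r hr y h1 h2
  obtain ⟨x, τ, τ', hx, hx', hc, hc', rfl⟩ := exists_parents h1 h2
  rcases edgeRule_parent_table i r hr τ τ' hc hc' with rfl | hsep | ⟨r', hr', rfl, rfl, hd, hc'', ho⟩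
  · exact mem_dualPat.2 ⟨_, hx, mem_dualFace.2 ⟨Or.inl rfl, rfl⟩⟩
  · exact (hsep.false_of_mem hw (hA hx) (hA hx')).elim
  · rw [hd] at hx'
    exact mem_dualPat.2 ⟨_, h r' hr' x hx hx', mem_dualFace.2 ⟨hc'', by rw [ho]⟩⟩

theorem not_isolatedEdge_subset_dualPat {p : Fin 3 × Z3} (hp : p ∈ isolatedEdges) (y : Z3)
    (h1 : (y, p.1) ∈ dualPat i A) (h2 : (y + p.2, p.1) ∈ dualPat i A) : False := by
  obtain ⟨x, τ, τ', hx, hx', hc, hc', -⟩ := exists_parents h1 h2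
  exact (isolatedEdge_parent_table i p hp τ τ' hc hc').false_of_mem hw (hA hx) (hA hx')

end OrderedPlane

theorem isStronglyCovered_of_edgeClosed {W : Set Face} (hcov : IsCovered LFS W)
    (hclosed : EdgeClosed W)
    (hiso : ∀ p ∈ isolatedEdges, ∀ y, (y, p.1) ∈ W → (y + p.2, p.1) ∈ W → False) :
    IsStronglyCovered LFS W := by
  refine ⟨hcov, fun X hX t hsub => ?_⟩
  have hrule : ∀ r ∈ edgeRules, X = {(0, r.1), (r.2.1, r.1)} →
      ∃ Y ∈ LFS, ∃ s, translatePat t X ⊆ translatePat s Y ∧ translatePat s Y ⊆ W := by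
    rintro r hr rfl
    rw [translatePat_pair_subset] at hsub
    have h1 : (t, r.1) ∈ W := by simpa using hsub.1
    have h2 : (t + r.2.1, r.1) ∈ W := by simpa [add_comm] using hsub.2
    refine ⟨{(0, r.1), (r.2.1, r.1), (0, r.2.2)}, ?_, t,
      Set.image_mono (Set.insert_subset_insert (Set.singleton_subset_iff.2 (Set.mem_insert _ _))), ?_⟩
    · simp only [edgeRules, List.mem_cons, List.not_mem_nil, or_false] at hr
      rcases hr with rfl | rfl | rfl <;> simp [LFS]
    · simp [translatePat, Set.image_insert_eq, Set.insert_subset_iff, add_comm, h1, h2,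
        hclosed r hr t h1 h2]
  have hiso' : ∀ p ∈ isolatedEdges, X = {(0, p.1), (p.2, p.1)} → False := by
    rintro p hp rfl
    rw [translatePat_pair_subset] at hsub
    exact hiso p hp t (by simpa using hsub.1) (by simpa [add_comm] using hsub.2)
  simp only [Ledge, Set.mem_insert_iff, Set.mem_singleton_iff] at hX
  rcases hX with rfl | rfl | rfl | rfl | rfl | rfl | rfl | rfl | rfl | rfl | rfl | rfl
  any_goals (refine ⟨_, ?_, t, subset_rfl, hsub⟩; simp [LFS]; done)
  · exact (hiso' (0, ![0,1,0]) (by simp [isolatedEdges]) rfl).elim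
  · exact (hiso' (0, ![0,0,1]) (by simp [isolatedEdges]) rfl).elim
  · exact hrule (1, ![1,0,0], 2) (by simp [edgeRules]) rfl
  · exact (hiso' (1, ![0,0,1]) (by simp [isolatedEdges]) rfl).elim
  · exact hrule (2, ![1,0,0], 1) (by simp [edgeRules]) rfl
  · exact hrule (2, ![0,1,0], 0) (by simp [edgeRules]) rfl

/-- The extent along axis `j` of a face of type `c`. -/
def thick (c j : Fin 3) : ℤ := if j = c then 0 else 1

theorem faceGeom_eq_pi (f : Face) :
    faceGeom f = Set.univ.pi fun j => Set.Icc (f.1 j : ℝ) (f.1 j + thick f.2 j) := by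
  ext q
  simp only [faceGeom, thick, Set.mem_ofPred_eq, Set.mem_pi, Set.mem_univ, true_implies,
    Set.mem_Icc]
  constructor
  · rintro ⟨hc, h⟩ j
    by_cases hj : j = f.2
    · subst hj; simp [hc]
    · simpa [hj] using h j hj
  · intro h
    refine ⟨?_, fun j hj => by simpa [hj] using h j⟩
    have := h f.2
    simp only [if_true, Int.cast_zero, add_zero] at this
    exact le_antisymm this.2 this.1

/-- The faces `[x,c]*` and `[x + d,c']*` intersect. -/
abbrev FacesMeet (d : Z3) (c c' : Fin 3) : Prop := ∀ j, -thick c' j ≤ d j ∧ d j ≤ thick c j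

theorem faceGeom_inter_nonempty_iff {x x' : Z3} {c c' : Fin 3} :
    (faceGeom (x, c) ∩ faceGeom (x', c')).Nonempty ↔ FacesMeet (x' - x) c c' := by
  rw [faceGeom_eq_pi, faceGeom_eq_pi, ← Set.pi_inter_distrib, Set.univ_pi_nonempty_iff]
  refine forall_congr' fun j => ?_
  have h0 : 0 ≤ thick c j := by unfold thick; split_ifs <;> simp
  have h0' : 0 ≤ thick c' j := by unfold thick; split_ifs <;> simp
  simp only [Set.Icc_inter_Icc, Set.nonempty_Icc, sup_le_iff, le_inf_iff, Pi.sub_apply]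
  norm_cast
  omega

theorem locallyFinite_faceGeom : LocallyFinite faceGeom := by
  intro q
  refine ⟨Metric.ball q 1, Metric.ball_mem_nhds q one_pos, ?_⟩
  refine ((Set.finite_Icc (fun j => ⌊q j⌋ - 1) (fun j => ⌊q j⌋ + 1)).prod
    (Set.finite_univ (α := Fin 3))).subset ?_
  rintro ⟨x, c⟩ ⟨z, hz, hzq⟩
  rw [faceGeom_eq_pi] at hz
  have hb : ∀ j, ⌊q j⌋ - 1 ≤ x j ∧ x j ≤ ⌊q j⌋ + 1 := fun j => by
    have hzj := hz j trivial
    have hq := (dist_le_pi_dist z q j).trans_lt (Metric.mem_ball.1 hzq)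
    have ht : (thick c j : ℝ) ≤ 1 := by unfold thick; split_ifs <;> simp
    rw [Real.dist_eq, abs_lt] at hq
    simp only [Set.mem_Icc] at hzj
    have h1 := Int.floor_lt.2 (show q j < ((x j + 2 : ℤ) : ℝ) by push_cast; linarith)
    have h2 := Int.le_floor.2 (show ((x j - 1 : ℤ) : ℝ) ≤ q j by push_cast; linarith)
    omega
  exact ⟨⟨fun j => (hb j).1, fun j => (hb j).2⟩, trivial⟩

theorem isClosed_patGeom (S : Set Face) : IsClosed (patGeom S) := by
  rw [patGeom, Set.biUnion_eq_iUnion]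
  exact (locallyFinite_faceGeom.comp_injective Subtype.val_injective).isClosed_iUnion
    fun f => by
      rw [Function.comp_apply, faceGeom_eq_pi]
      exact isClosed_set_pi fun j _ => isClosed_Icc

theorem patGeom_inter_closure_eq_empty_iff {S T : Set Face} :
    patGeom S ∩ closure (patGeom T) = ∅ ↔
      ∀ f ∈ S, ∀ f' ∈ T, ¬ (faceGeom f ∩ faceGeom f').Nonempty := by
  rw [(isClosed_patGeom T).closure_eq, Set.eq_empty_iff_forall_notMem]
  constructor
  · intro h f hf f' hf' ⟨q, hq, hq'⟩
    exact h q ⟨Set.mem_biUnion hf hq, Set.mem_biUnion hf' hq'⟩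
  · rintro h q ⟨hqS, hqT⟩
    obtain ⟨f, hf, hq⟩ := Set.mem_iUnion₂.1 hqS
    obtain ⟨f', hf', hq'⟩ := Set.mem_iUnion₂.1 hqT
    exact h f hf f' hf' ⟨q, hq, hq'⟩

/-- Two faces of type `i` at this relative position are disjoint, but their images under `Σᵢ`
(translates of `Uset`) touch at a corner. -/
def exceptionalShift : Fin 3 → Z3 := ![![1,1,-1], ![1,1,-1], ![1,-1,1]]

theorem meet_parent_table : ∀ (i τ τ' c c' : Fin 3) (D : Fin 3 → Fin 3),
    ChildType i τ c → ChildType i τ' c' → FacesMeet (fun j => (D j : ℤ) - 1) c c' →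
    FacesMeet (parentShift i τ τ' fun j => (D j : ℤ) - 1) τ τ' ∨
    Separated (parentShift i τ τ' fun j => (D j : ℤ) - 1) τ τ' ∨
    τ = i ∧ τ' = i ∧ ((parentShift i τ τ' fun j => (D j : ℤ) - 1) = exceptionalShift i ∨
      (parentShift i τ τ' fun j => (D j : ℤ) - 1) = -exceptionalShift i) := by
  decide

theorem FacesMeet.exists_eq_sub_one {δ : Z3} {c c' : Fin 3} (h : FacesMeet δ c c') :
    ∃ D : Fin 3 → Fin 3, δ = fun j => (D j : ℤ) - 1 := by
  have hb : ∀ j, -1 ≤ δ j ∧ δ j ≤ 1 := fun j => by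
    have := h j
    unfold thick at this
    split_ifs at this <;> omega
  refine ⟨fun j => ⟨(δ j + 1).toNat, by have := hb j; omega⟩, funext fun j => ?_⟩
  have := hb j
  simp only
  omega

/-- `(c, δ, i)`: both `[0,c]*` and `[δ,c]*` meet both `[0,i]*` and `[exceptionalShift i,i]*`. -/
def bridgeRule : Fin 3 → Fin 3 × Z3 × Fin 3 :=
  ![(2, ![0,1,0], 0), (2, ![1,0,0], 1), (1, ![1,0,0], 2)]

theorem bridge_table : ∀ i : Fin 3, bridgeRule i ∈ edgeRules ∧ (bridgeRule i).2.2 = i ∧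
    FacesMeet 0 (bridgeRule i).1 i ∧ FacesMeet (exceptionalShift i) (bridgeRule i).1 i ∧
    FacesMeet (-(bridgeRule i).2.1) (bridgeRule i).1 i ∧
    FacesMeet (exceptionalShift i - (bridgeRule i).2.1) (bridgeRule i).1 i := by
  decide

theorem bridges_mem_stepped {w : R3} (hw : OrderedNormal w) (i : Fin 3) {v : Z3}
    (h : (v, i) ∈ stepped w) (h' : (v + exceptionalShift i, i) ∈ stepped w) :
    (v, (bridgeRule i).1) ∈ stepped w ∧ (v + (bridgeRule i).2.1, (bridgeRule i).1) ∈ stepped w := by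
  obtain ⟨-, h01, h12, h2⟩ := hw
  obtain ⟨h0, h1⟩ := h
  obtain ⟨h0', h1'⟩ := h'
  simp only [stepped, Set.mem_ofPred_eq, dot3_add] at h0' h1' ⊢
  fin_cases i <;>
    simp only [exceptionalShift, bridgeRule, dot3_apply, Fin.isValue, Fin.zero_eta, Fin.mk_one,
      Fin.reduceFinMk, cons_val_zero, cons_val_one, cons_val, Int.cast_zero, Int.cast_one,
      Int.cast_neg, zero_mul, one_mul, neg_mul, zero_add, add_zero] at h0 h0' h1' h1 ⊢ <;>
    refine ⟨⟨h0, ?_⟩, ?_, ?_⟩ <;> linarith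

section Annulus

variable {w : R3} {P A : Set Face}
  (hsep : ∀ f ∈ P, ∀ f' ∈ stepped w \ (P ∪ A), ¬ (faceGeom f ∩ faceGeom f').Nonempty)
include hsep

theorem mem_of_meets {B p o : Face} (hB : B ∈ stepped w) (hp : p ∈ P)
    (ho : o ∈ stepped w \ (P ∪ A)) (hBp : (faceGeom B ∩ faceGeom p).Nonempty)
    (hBo : (faceGeom B ∩ faceGeom o).Nonempty) : B ∈ A := by
  by_contra hBA
  by_cases hBP : B ∈ P
  · exact hsep B hBP o ho hBo
  · exact hsep p hp B ⟨hB, by simp [hBP, hBA]⟩ (Set.inter_comm _ _ ▸ hBp)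

theorem false_of_exceptional (hw : OrderedNormal w) (hP : P ⊆ stepped w) (hA : EdgeClosed A)
    (hAP : A ∩ P = ∅) (i : Fin 3) {v : Z3}
    (h : (v, i) ∈ P ∧ (v + exceptionalShift i, i) ∈ stepped w \ (P ∪ A) ∨
      (v, i) ∈ stepped w \ (P ∪ A) ∧ (v + exceptionalShift i, i) ∈ P) : False := by
  obtain ⟨hrule, hi, m1, m2, m3, m4⟩ := bridge_table i
  have hv : (v, i) ∈ stepped w := by rcases h with ⟨h, -⟩ | ⟨h, -⟩; exacts [hP h, h.1]
  have hv' : (v + exceptionalShift i, i) ∈ stepped w := by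
    rcases h with ⟨-, h⟩ | ⟨-, h⟩; exacts [h.1, hP h]
  obtain ⟨hB, hB'⟩ := bridges_mem_stepped hw i hv hv'
  have hmem : ∀ {B : Face}, B ∈ stepped w → (faceGeom B ∩ faceGeom (v, i)).Nonempty →
      (faceGeom B ∩ faceGeom (v + exceptionalShift i, i)).Nonempty → B ∈ A := by
    intro B hB h1 h2
    rcases h with ⟨hp, ho⟩ | ⟨ho, hp⟩
    exacts [mem_of_meets hsep hB hp ho h1 h2, mem_of_meets hsep hB hp ho h2 h1]
  have hvA := hA _ hrule v
    (hmem hB (faceGeom_inter_nonempty_iff.2 (by rwa [sub_self]))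
      (faceGeom_inter_nonempty_iff.2 (by rwa [add_sub_cancel_left])))
    (hmem hB' (faceGeom_inter_nonempty_iff.2 (by rwa [sub_add_cancel_left]))
      (faceGeom_inter_nonempty_iff.2 (by rwa [add_sub_add_left_eq_sub])))
  rw [hi] at hvA
  rcases h with ⟨hp, -⟩ | ⟨ho, -⟩
  · exact hAP.subset ⟨hvA, hp⟩
  · exact ho.2 (Or.inr hvA)

end Annulus

theorem isCovered_LFS_dualPat {P : Set Face} (i : Fin 3) (h : IsCovered LFS P) :
    IsCovered LFS (dualPat i P) :=
  isCovered_dualPat (fun _ hR t => isCovered_dualPat_translatePat_of_mem_LFS i hR t) h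

theorem isStronglyCovered_LFS_dualPat {w : R3} (hw : OrderedNormal w) {A : Set Face}
    (hA : A ⊆ stepped w) (i : Fin 3) (h : IsStronglyCovered LFS A) :
    IsStronglyCovered LFS (dualPat i A) :=
  isStronglyCovered_of_edgeClosed (isCovered_LFS_dualPat i h.1) ((edgeClosed_of_isStronglyCovered h).dualPat hw hA i)
    fun _ hp y => not_isolatedEdge_subset_dualPat hw hA i hp y

theorem dualPat_separated {w : R3} (hw : OrderedNormal w) {P A : Set Face}
    (hP : P ⊆ stepped w)
    (hsep : ∀ f ∈ P, ∀ f' ∈ stepped w \ (P ∪ A), ¬ (faceGeom f ∩ faceGeom f').Nonempty)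
    (hA : EdgeClosed A) (hAP : A ∩ P = ∅) (i : Fin 3) :
    ∀ g ∈ dualPat i P, ∀ g' ∈ dualPat i (stepped w \ (P ∪ A)),
      ¬ (faceGeom g ∩ faceGeom g').Nonempty := by
  rintro ⟨y, c⟩ hg ⟨y', c'⟩ hg' hmeet
  rw [faceGeom_inter_nonempty_iff] at hmeet
  obtain ⟨D, hD⟩ := hmeet.exists_eq_sub_one
  obtain ⟨x, τ, τ', hx, hx', hc, hc', -⟩ :=
    exists_parents (δ := y' - y) hg (by rwa [add_sub_cancel])
  rw [hD] at hx' hmeet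
  rcases meet_parent_table i τ τ' c c' D hc hc' hmeet with hm | hs | ⟨rfl, rfl, hu | hu⟩
  · exact hsep _ hx _ hx' (faceGeom_inter_nonempty_iff.2 (by rwa [add_sub_cancel_left]))
  · exact hs.false_of_mem hw (hP hx) hx'.1
  · rw [hu] at hx'
    exact false_of_exceptional hsep hw hP hA hAP _ (Or.inl ⟨hx, hx'⟩)
  · rw [hu, ← sub_eq_add_neg] at hx'
    exact false_of_exceptional hsep hw hP hA hAP _ (Or.inr ⟨hx', by rwa [sub_add_cancel]⟩)

end DualSubst

open DualSubst

/-- If `Γ = Γ_w` avoids the four forbidden patterns and `A ⊆ Γ` is an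
`L_FS`-annulus of a pattern `P ⊆ Γ` in `Γ`, then `Σᵢ(A)` is an `L_FS`-annulus of
`Σᵢ(P)` in `Σᵢ(Γ)`. -/
theorem annulus_image (w : R3) (hw : ∀ i, 0 ≤ w i)
    (havoid : ∀ X ∈ Forbidden, ∀ t : Z3, ¬ translatePat t X ⊆ stepped w)
    (P A : Set Face) (hP : P ⊆ stepped w) (hA : A ⊆ stepped w)
    (h : IsAnnulus (stepped w) P A) (i : Fin 3) :
    IsAnnulus (dualPat i (stepped w)) (dualPat i P) (dualPat i A) := by
  obtain ⟨hcovP, hcovAP, hcovΩ, hstrong, hAP, hsep⟩ := h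
  have hw' := orderedNormal_of_avoids hw havoid
  have hΩ : ∀ S T : Set Face, S ⊆ stepped w → T ⊆ stepped w →
      dualPat i (stepped w) \ (dualPat i S ∪ dualPat i T) = dualPat i (stepped w \ (S ∪ T)) :=
    fun S T hS hT => by rw [← dualPat_union, dualPat_stepped_diff hw' i (Set.union_subset hS hT)]
  refine ⟨isCovered_LFS_dualPat i hcovP, dualPat_union i A P ▸ isCovered_LFS_dualPat i hcovAP,
    hΩ A P hA hP ▸ isCovered_LFS_dualPat i hcovΩ, isStronglyCovered_LFS_dualPat hw' hA i hstrong,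
    dualPat_inter_eq_empty hw' i hA hP hAP, ?_⟩
  rw [patGeom_inter_closure_eq_empty_iff] at hsep ⊢
  rw [hΩ P A hP hA]
  exact dualPat_separated hw' hP hsep (edgeClosed_of_isStronglyCovered hstrong) hAP i
end
end

section
/- Let v ∈ O₃⁺ with v ≠ 0 and set ξ(v) = min{vᵢ : vᵢ ≠ 0}. If ω ≥ ‖v‖∞ + ξ(v), then the arithmetical discrete plane P(v,ω) is 2-connected. Consequently Ω(v) ≤ ‖v‖∞ + ξ(v). -/
open Matrix
open scoped Classical

noncomputable section

/-- `ξ(v) = min {vᵢ : vᵢ ≠ 0}`, the smallest non-zero coordinate. -/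
def xiMin (v : R3) : ℝ := sInf {r : ℝ | (∃ i : Fin 3, r = v i) ∧ r ≠ 0}

/-! Since `v 2 > 0`, every column `x + ℤ e₂` contains exactly one point of height `⟨·, v⟩` in
`[0, v 2)`, its base `colBase v 2 x`, and every point of the plane in that column reaches it by
stepping down along `e₂`. From a base, a step along `e₀` raises the height by `v 0 ≤ ξ`, so it
stays in the plane of thickness `v 2 + ξ` and then descends to the base of the neighbouring
column. A step along `e₁` works from a base of height below `v 0`, which every row of columns
contains (from any base if `v 0 = 0`, where `v 1 ≤ ξ`). So "the bases of the columns of `x` and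
`y` are joined" is an equivalence relation invariant under translation by `e₀, e₁, e₂`, hence
it holds for all `x, y`. -/

def Joined3 (A : Set Z3) : Z3 → Z3 → Prop :=
  Relation.ReflTransGen (fun a b => b ∈ A ∧ adj3 a b)

section Adjacency

variable {A : Set Z3} {x y : Z3}

lemma adj3_comm : adj3 x y ↔ adj3 y x := by
  simp only [adj3, abs_sub_comm]

lemma adj3_add_single (x : Z3) (i : Fin 3) : adj3 x (x + Pi.single i 1) := by
  simp [adj3, Pi.single_apply, apply_ite]

lemma Joined3.mem (hx : x ∈ A) (h : Joined3 A x y) : y ∈ A := by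
  induction h with
  | refl => exact hx
  | tail _ hstep _ => exact hstep.1

lemma Joined3.symm (hx : x ∈ A) (h : Joined3 A x y) : Joined3 A y x := by
  induction h with
  | refl => exact .refl
  | tail hxy hstep ih => exact .head ⟨Joined3.mem hx hxy, adj3_comm.1 hstep.2⟩ ih

end Adjacency

section Translations

variable {G : Type*} [AddGroup G] {r : G → G → Prop}

def Equivalence.translationSubgroup (hr : Equivalence r) : AddSubgroup G where
  carrier := {d | ∀ x, r x (x + d)}
  zero_mem' x := by simpa using hr.refl x
  add_mem' {a b} ha hb x := hr.trans (ha x) (by simpa [add_assoc] using hb (x + a))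
  neg_mem' {a} ha x := hr.symm (by simpa using ha (x + -a))

lemma Equivalence.rel_of_single_mem_translationSubgroup {ι : Type*} [Fintype ι] [DecidableEq ι]
    {r : (ι → ℤ) → (ι → ℤ) → Prop} (hr : Equivalence r)
    (h : ∀ i, Pi.single i 1 ∈ hr.translationSubgroup) (x y : ι → ℤ) : r x y := by
  have hall : y - x ∈ hr.translationSubgroup := by
    rw [← Finset.univ_sum_single (y - x)]
    refine AddSubgroup.sum_mem _ fun i _ => ?_
    simpa [← Pi.single_smul] using AddSubgroup.zsmul_mem _ (h i) ((y - x) i)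
  simpa using hall x

end Translations

section Dot

variable (v : R3)

lemma dot3_add (x y : Z3) : dot3 (x + y) v = dot3 x v + dot3 y v := by
  simp [dot3, add_mul, Finset.sum_add_distrib]

lemma dot3_sub (x y : Z3) : dot3 (x - y) v = dot3 x v - dot3 y v := by
  simp [dot3, sub_mul, Finset.sum_sub_distrib]

lemma dot3_single (i : Fin 3) (k : ℤ) : dot3 (Pi.single i k) v = k * v i := by
  simp [dot3, Pi.single_apply]

lemma dot3_zero : dot3 0 v = 0 := by
  simp [dot3]

end Dot

def colBase (v : R3) (i : Fin 3) (x : Z3) : Z3 :=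
  x - Pi.single i ⌊dot3 x v / v i⌋

section ColBase

variable {v : R3} {ω : ℝ} {i : Fin 3} {x : Z3}

lemma dot3_colBase (hi : v i ≠ 0) (x : Z3) :
    dot3 (colBase v i x) v = v i * Int.fract (dot3 x v / v i) := by
  rw [colBase, dot3_sub, dot3_single, ← Int.self_sub_floor]
  field_simp

lemma dot3_colBase_nonneg (hi : 0 < v i) (x : Z3) : 0 ≤ dot3 (colBase v i x) v := by
  rw [dot3_colBase hi.ne']
  exact mul_nonneg hi.le (Int.fract_nonneg _)

lemma dot3_colBase_lt (hi : 0 < v i) (x : Z3) : dot3 (colBase v i x) v < v i := by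
  rw [dot3_colBase hi.ne']
  exact mul_lt_of_lt_one_right hi (Int.fract_lt_one _)

lemma colBase_mem_plane (hi : 0 < v i) (hω : v i ≤ ω) (x : Z3) : colBase v i x ∈ Plane v ω :=
  ⟨dot3_colBase_nonneg hi x, (dot3_colBase_lt hi x).trans_le hω⟩

lemma colBase_add_single (hi : v i ≠ 0) (x : Z3) (k : ℤ) :
    colBase v i (x + Pi.single i k) = colBase v i x := by
  have hfloor : ⌊dot3 (x + Pi.single i k) v / v i⌋ = ⌊dot3 x v / v i⌋ + k := by
    rw [dot3_add, dot3_single, add_div, mul_div_cancel_right₀ _ hi, Int.floor_add_intCast]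
  rw [colBase, colBase, hfloor, Pi.single_add]
  abel

lemma colBase_eq_self (h0 : 0 ≤ dot3 x v) (hlt : dot3 x v < v i) : colBase v i x = x := by
  have hi : 0 < v i := h0.trans_lt hlt
  have hfloor : ⌊dot3 x v / v i⌋ = 0 :=
    Int.floor_eq_zero_iff.2 ⟨div_nonneg h0 hi.le, (div_lt_one hi).2 hlt⟩
  simp [colBase, hfloor]

lemma joined3_sub_single (hi : 0 ≤ v i) :
    ∀ n : ℕ, ∀ x ∈ Plane v ω, n * v i ≤ dot3 x v →
      Joined3 (Plane v ω) x (x - Pi.single i (n : ℤ))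
  | 0, x, _, _ => by
    rw [Nat.cast_zero, Pi.single_zero, sub_zero]
    exact .refl
  | n + 1, x, hx, hn => by
    have hdot : dot3 (x - Pi.single i 1) v = dot3 x v - v i := by
      rw [dot3_sub, dot3_single, Int.cast_one, one_mul]
    have hnv : 0 ≤ (n : ℝ) * v i := mul_nonneg n.cast_nonneg hi
    push_cast at hn
    have hmem : x - Pi.single i 1 ∈ Plane v ω := by
      refine ⟨?_, ?_⟩ <;> rw [hdot] <;> linarith [hx.2]
    have hadj : adj3 x (x - Pi.single i 1) := by
      have h := adj3_add_single (x - Pi.single i 1) i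
      rw [sub_add_cancel] at h
      exact adj3_comm.1 h
    have htail := joined3_sub_single hi n _ hmem (by linarith)
    rw [Nat.cast_succ, add_comm, Pi.single_add, ← sub_sub]
    exact .head ⟨hmem, hadj⟩ htail

lemma joined3_colBase (hi : 0 < v i) (hx : x ∈ Plane v ω) :
    Joined3 (Plane v ω) x (colBase v i x) := by
  have hfloor : 0 ≤ ⌊dot3 x v / v i⌋ := Int.floor_nonneg.2 (div_nonneg hx.1 hi.le)
  have hle : (⌊dot3 x v / v i⌋.toNat : ℝ) * v i ≤ dot3 x v := by
    rw [← Int.cast_natCast, Int.toNat_of_nonneg hfloor, ← le_div_iff₀ hi]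
    exact Int.floor_le _
  simpa [colBase, Int.toNat_of_nonneg hfloor] using
    joined3_sub_single hi.le _ x hx hle

lemma joined3_colBase_add_single {j : Fin 3} (hi : 0 < v i) (hj : 0 ≤ v j)
    (hω : dot3 (colBase v i x) v + v j < ω) :
    Joined3 (Plane v ω) (colBase v i x) (colBase v i (x + Pi.single j 1)) := by
  set y := colBase v i x + Pi.single j 1
  have hdot : dot3 y v = dot3 (colBase v i x) v + v j := by
    rw [dot3_add, dot3_single, Int.cast_one, one_mul]
  have hy : y ∈ Plane v ω := ⟨by linarith [dot3_colBase_nonneg hi x], hdot ▸ hω⟩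
  have hcol : colBase v i y = colBase v i (x + Pi.single j 1) := by
    rw [← colBase_add_single hi.ne' (x + Pi.single j 1) (-⌊dot3 x v / v i⌋)]
    congr 1
    simp only [y, colBase, Pi.single_neg]
    abel
  exact .head ⟨hy, adj3_add_single _ j⟩ (hcol ▸ joined3_colBase hi hy)

end ColBase

section Plane

variable {v : R3} {ω : ℝ}

lemma exists_dot3_colBase_add_lt (hv : v ∈ O3) (h2 : 0 < v 2) (hω0 : v 2 + v 0 ≤ ω)
    (hω1 : v 0 = 0 → v 2 + v 1 ≤ ω) (x : Z3) :
    ∃ k : ℤ, dot3 (colBase v 2 (x + Pi.single 0 k)) v + v 1 < ω := by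
  obtain ⟨h0, h01, h12⟩ := hv
  rcases h0.eq_or_lt with h00 | h0
  · exact ⟨0, by linarith [dot3_colBase_lt h2 (x + Pi.single 0 0), hω1 h00.symm]⟩
  -- the column base of `x` along `e₀` has height below `v 0 ≤ v 2`, so it is also its own
  -- column base along `e₂`
  · refine ⟨-⌊dot3 x v / v 0⌋, ?_⟩
    have hx : x + Pi.single 0 (-⌊dot3 x v / v 0⌋) = colBase v 0 x := by
      rw [colBase, Pi.single_neg, sub_eq_add_neg]
    have hlt := dot3_colBase_lt h0 x
    rw [hx, colBase_eq_self (dot3_colBase_nonneg h0 x) (by linarith)]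
    linarith

theorem connected3_plane (hv : v ∈ O3) (h2 : 0 < v 2) (hω0 : v 2 + v 0 ≤ ω)
    (hω1 : v 0 = 0 → v 2 + v 1 ≤ ω) : Connected3 (Plane v ω) := by
  have hv0 : 0 ≤ v 0 := hv.1
  have hB : ∀ x, colBase v 2 x ∈ Plane v ω := colBase_mem_plane h2 (by linarith)
  let r x y := Joined3 (Plane v ω) (colBase v 2 x) (colBase v 2 y)
  have hr : Equivalence r := ⟨fun _ => .refl, fun h => Joined3.symm (hB _) h, .trans⟩
  have he0 : Pi.single 0 1 ∈ hr.translationSubgroup := fun x =>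
    joined3_colBase_add_single h2 hv0 (by linarith [dot3_colBase_lt h2 x])
  have he2 : Pi.single 2 1 ∈ hr.translationSubgroup := fun x => by
    simp only [r, colBase_add_single h2.ne']
    exact .refl
  have hrow : ∀ x (k : ℤ), r x (x + Pi.single 0 k) := fun x k => by
    simpa [← Pi.single_smul] using AddSubgroup.zsmul_mem _ he0 k x
  have he1 : Pi.single 1 1 ∈ hr.translationSubgroup := fun x => by
    obtain ⟨k, hk⟩ := exists_dot3_colBase_add_lt hv h2 hω0 hω1 x
    have hcross : r (x + Pi.single 0 k) (x + Pi.single 0 k + Pi.single 1 1) :=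
      joined3_colBase_add_single h2 (hv0.trans hv.2.1) hk
    rw [add_right_comm] at hcross
    exact hr.trans (hrow x k) (hr.trans hcross (hr.symm (hrow _ k)))
  have htotal := hr.rel_of_single_mem_translationSubgroup fun i => by
    fin_cases i
    exacts [he0, he1, he2]
  refine ⟨⟨0, ?_⟩, fun x hx y hy => ?_⟩
  · simpa [Plane, dot3_zero] using h2.trans_le (by linarith)
  · exact (joined3_colBase h2 hx).trans
      ((htotal x y).trans ((joined3_colBase h2 hy).symm hy))

end Plane

lemma le_xiMin {v : R3} {c : ℝ} (hne : v ≠ 0) (h : ∀ i, v i ≠ 0 → c ≤ v i) : c ≤ xiMin v := by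
  obtain ⟨i, hi⟩ := Function.ne_iff.1 hne
  refine le_csInf ⟨v i, ⟨i, rfl⟩, hi⟩ ?_
  rintro _ ⟨⟨j, rfl⟩, hj⟩
  exact h j hj

lemma O3.two_pos {v : R3} (hv : v ∈ O3) (hne : v ≠ 0) : 0 < v 2 := by
  obtain ⟨h0, h01, h12⟩ := hv
  refine (h0.trans (h01.trans h12)).lt_of_ne fun h2 => hne ?_
  funext i
  fin_cases i <;> simp only [Fin.zero_eta, Fin.mk_one, Fin.reduceFinMk, Pi.zero_apply] <;> linarith

/-- For `v ∈ O₃⁺`, `v ≠ 0`: if `ω ≥ ‖v‖∞ + ξ(v)` then `P(v,ω)` is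
2-connected; consequently `Ω(v) ≤ ‖v‖∞ + ξ(v)`. -/
theorem omega_upper_bound (v : R3) (hv : v ∈ O3) (hne : v ≠ 0) :
    (∀ ω : ℝ, max (v 0) (max (v 1) (v 2)) + xiMin v ≤ ω → Connected3 (Plane v ω)) ∧
    omegaConn v ≤ max (v 0) (max (v 1) (v 2)) + xiMin v := by
  have ⟨h0, h01, h12⟩ := hv
  have h2 : 0 < v 2 := O3.two_pos hv hne
  have hxi0 : v 0 ≤ xiMin v := le_xiMin hne fun i _ => by
    fin_cases i
    exacts [le_rfl, h01, h01.trans h12]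
  have hxi1 : v 0 = 0 → v 1 ≤ xiMin v := fun h00 => le_xiMin hne fun i hi => by
    fin_cases i
    exacts [absurd h00 hi, le_rfl, h12]
  have hmax : max (v 0) (max (v 1) (v 2)) = v 2 := by
    rw [max_eq_right h12, max_eq_right (h01.trans h12)]
  have hconn : ∀ ω, v 2 + xiMin v ≤ ω → Connected3 (Plane v ω) := fun ω hω =>
    connected3_plane hv h2 (by linarith) fun h00 => by linarith [hxi1 h00]
  rw [hmax]
  exact ⟨hconn, csInf_le ⟨0, fun _ h => h.1⟩ ⟨by linarith, hconn _ le_rfl⟩⟩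
end
end
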